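/- Let (L,[·,·],α) be a Hom-Lie algebra over a field of characteristic zero, with α injective (nondegenerate). Consider the current Hom-Lie algebra L ⊗ tK[t]/(tⁿ) with bracket [x⊗a, y⊗b] = [x,y]⊗ab and twist α⊗id. Then the map D = α ⊗ t(d/dt), sending x⊗tⁱ ↦ i·α(x)⊗tⁱ, is an injective (α⊗id)-derivation of L ⊗ tK[t]/(tⁿ): D([u,v]) = [D(u),(α⊗id)(v)] + [(α⊗id)(u),D(v)] for all u,v, and D commutes with α⊗id. -/

import Mathlib

variable {K L : Type*} [Field K] [AddCommGroup L] [Module K L]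

/-- The bracket of the current Hom-Lie algebra `L ⊗ tK[t]/(tⁿ)`, where an element
is recorded by its coefficients `f : ℕ → L` (the coefficient of `tᵈ` being `f d`,
with `f 0 = 0` and `f d = 0` for `d ≥ n`): `[x⊗a, y⊗b] = [x,y] ⊗ ab`. -/
def curBr (br : L →ₗ[K] L →ₗ[K] L) (n : ℕ) (f g : ℕ → L) : ℕ → L :=
  fun d => if d < n then ∑ p ∈ Finset.HasAntidiagonal.antidiagonal d, br (f p.1) (g p.2) else 0

/-- The twist `α ⊗ id` of the current Hom-Lie algebra. -/
def curTw (α : L →ₗ[K] L) (f : ℕ → L) : ℕ → L := fun d => α (f d)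

/-- The map `D = α ⊗ t(d/dt)`, sending `x ⊗ tⁱ` to `i·α(x) ⊗ tⁱ`. -/
def curD (α : L →ₗ[K] L) (f : ℕ → L) : ℕ → L := fun d => d • α (f d)

/-- Membership in `L ⊗ tK[t]/(tⁿ)`: coefficients vanish in degree `0` and in
degrees `≥ n`. -/
def curSupp (n : ℕ) (f : ℕ → L) : Prop := f 0 = 0 ∧ ∀ d, n ≤ d → f d = 0

section CurrentAlgebra

variable (br : L →ₗ[K] L →ₗ[K] L) (α : L →ₗ[K] L)

/-- Degreewise this is `(i + j) • α [x, y] = [i • α x, α y] + [α x, j • α y]`. -/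
theorem curD_curBr (hmult : ∀ x y : L, α (br x y) = br (α x) (α y)) (n : ℕ) (f g : ℕ → L) :
    curD α (curBr br n f g)
      = curBr br n (curD α f) (curTw α g) + curBr br n (curTw α f) (curD α g) := by
  funext d
  simp only [curD, curBr, curTw, Pi.add_apply]
  split_ifs
  · simp only [map_sum, Finset.smul_sum, ← Finset.sum_add_distrib]
    refine Finset.sum_congr rfl fun p hp => ?_
    rw [Finset.HasAntidiagonal.mem_antidiagonal] at hp
    rw [hmult, map_nsmul, LinearMap.smul_apply, map_nsmul, ← hp, add_nsmul]
  · simp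

theorem curD_curTw (f : ℕ → L) : curD α (curTw α f) = curTw α (curD α f) := by
  funext d
  simp [curD, curTw, map_nsmul]

theorem eq_zero_of_curD_eq_zero [CharZero K] (hinj : Function.Injective α) {f : ℕ → L}
    (hf0 : f 0 = 0) (hD : curD α f = 0) : f = 0 := by
  funext d
  obtain rfl | hd := eq_or_ne d 0
  · exact hf0
  · have hαf : (d : K) • α (f d) = 0 := by
      rw [Nat.cast_smul_eq_nsmul]
      exact congrFun hD d
    exact hinj <| by simpa [hd] using hαf

end CurrentAlgebra

theorem stmt19_general [CharZero K] (br : L →ₗ[K] L →ₗ[K] L) (α : L →ₗ[K] L)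
    (hmult : ∀ x y : L, α (br x y) = br (α x) (α y))
    (hinj : Function.Injective α) (n : ℕ) :
    (∀ f g : ℕ → L, curSupp n f → curSupp n g →
      curD α (curBr br n f g)
        = curBr br n (curD α f) (curTw α g) + curBr br n (curTw α f) (curD α g)) ∧
    (∀ f : ℕ → L, curD α (curTw α f) = curTw α (curD α f)) ∧
    (∀ f : ℕ → L, curSupp n f → curD α f = 0 → f = 0) :=
  ⟨fun f g _ _ => curD_curBr br α hmult n f g, curD_curTw α,
    fun _ hf => eq_zero_of_curD_eq_zero α hinj hf.1⟩

/-- For a multiplicative Hom-Lie algebra `L` over a field of characteristic zero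
with injective twist `α`, the map `D = α ⊗ t(d/dt)` is an injective
`(α⊗id)`-derivation of the current Hom-Lie algebra `L ⊗ tK[t]/(tⁿ)`, commuting
with the twist `α ⊗ id`. -/
theorem stmt19 [CharZero K] (br : L →ₗ[K] L →ₗ[K] L) (α : L →ₗ[K] L)
    (hanti : ∀ x y : L, br y x = - br x y)
    (hjac : ∀ x y z : L,
      br (br x y) (α z) + br (br z x) (α y) + br (br y z) (α x) = 0)
    (hmult : ∀ x y : L, α (br x y) = br (α x) (α y))
    (hinj : Function.Injective α) (n : ℕ) :
    (∀ f g : ℕ → L, curSupp n f → curSupp n g →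
      curD α (curBr br n f g)
        = curBr br n (curD α f) (curTw α g) + curBr br n (curTw α f) (curD α g)) ∧
    (∀ f : ℕ → L, curD α (curTw α f) = curTw α (curD α f)) ∧
    (∀ f : ℕ → L, curSupp n f → curD α f = 0 → f = 0) :=
  stmt19_general br α hmult hinj n
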